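/- There exist a locally finite 2-connected simple graph G and an edge set D ⊆ E(G) such that D has finite even intersection with every finite circuit of G and with the edge set of every double ray of G, but D ∩ D' is infinite for some element D' of the algebraic cycle space C_alg(G). -/

import Mathlib

open Set

variable {V : Type*}

/-- The edge set of a cycle of `G` (a finite circuit). -/
def IsCircuit (G : SimpleGraph V) (C : Set (Sym2 V)) : Prop :=
  ∃ (v : V) (w : G.Walk v v), w.IsCycle ∧ C = {e | e ∈ w.edges}

/-- The cut `E(A, V∖A)`: edges of `G` with exactly one endvertex in `A`. -/
def cutEdges (G : SimpleGraph V) (A : Set V) : Set (Sym2 V) :=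
  {e | ∃ x y, G.Adj x y ∧ x ∈ A ∧ y ∉ A ∧ e = s(x, y)}

/-- `C` is a cut of `G`. -/
def IsCut (G : SimpleGraph V) (C : Set (Sym2 V)) : Prop :=
  ∃ A : Set V, C = cutEdges G A

/-- A bond is a ⊆-minimal nonempty cut. -/
def IsBond (G : SimpleGraph V) (B : Set (Sym2 V)) : Prop :=
  IsCut G B ∧ B ≠ ∅ ∧ ∀ C, IsCut G C → C ≠ ∅ → C ⊆ B → C = B

/-- Two edge sets are orthogonal: their intersection is finite and of even cardinality. -/
def EvenInter (D F : Set (Sym2 V)) : Prop :=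
  (D ∩ F).Finite ∧ Even (D ∩ F).ncard

/-- A ray in `G`. -/
def IsRay (G : SimpleGraph V) (R : ℕ → V) : Prop :=
  Function.Injective R ∧ ∀ n, G.Adj (R n) (R (n + 1))

/-- A double ray in `G`. -/
def IsDoubleRay (G : SimpleGraph V) (R : ℤ → V) : Prop :=
  Function.Injective R ∧ ∀ n, G.Adj (R n) (R (n + 1))

/-- The edge set of a double ray. -/
def doubleRayEdges (R : ℤ → V) : Set (Sym2 V) :=
  {e | ∃ n : ℤ, e = s(R n, R (n + 1))}

/-- `D` is the edge set of some double ray of `G`. -/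
def IsDoubleRayEdgeSet (G : SimpleGraph V) (D : Set (Sym2 V)) : Prop :=
  ∃ R : ℤ → V, IsDoubleRay G R ∧ D = doubleRayEdges R

/-- `a` and `b` are joined by a walk of `G` all of whose vertices avoid `S`,
i.e. they lie in a common component of `G − S`. -/
def ConnAvoiding (G : SimpleGraph V) (S : Set V) (a b : V) : Prop :=
  ∃ w : G.Walk a b, ∀ x ∈ w.support, x ∉ S

/-- `v` lies in `C(S,R)`, the component of `G − S` containing a tail of the ray `R`. -/
def InC (G : SimpleGraph V) (S : Set V) (R : ℕ → V) (v : V) : Prop :=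
  ∃ m : ℕ, (∀ n, R (m + n) ∉ S) ∧ ConnAvoiding G S v (R m)

/-- The rays `R` and `R'` are equivalent (lie in the same end): for every finite `S`
some component of `G − S` contains a tail of both. -/
def RayEquiv (G : SimpleGraph V) (R R' : ℕ → V) : Prop :=
  ∀ S : Set V, S.Finite → ∃ m m', (∀ n, R (m + n) ∉ S) ∧ (∀ n, R' (m' + n) ∉ S) ∧
    ConnAvoiding G S (R m) (R' m')

/-- The sequence `v` of vertices converges to the end of the ray `R`: for every finite `S`
all but finitely many `v i` lie in `C(S,R)`. -/
def ConvergesTo (G : SimpleGraph V) (R : ℕ → V) (v : ℕ → V) : Prop :=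
  ∀ S : Set V, S.Finite → {i : ℕ | ¬ InC G S R (v i)}.Finite

/-- `F` is the vertex set of a `k`-fan from `u` to `Y`: a union of `k` paths starting
at `u`, pairwise sharing no vertex other than `u`, ending in `k` distinct vertices of `Y`. -/
def IsFan (G : SimpleGraph V) (k : ℕ) (u : V) (Y : Set V) (F : Set V) : Prop :=
  ∃ (ends : Fin k → V) (P : ∀ i, G.Walk u (ends i)),
    (∀ i, (P i).IsPath) ∧ (∀ i, ends i ∈ Y) ∧ Function.Injective ends ∧
    (∀ i j, i ≠ j → ∀ x, x ∈ (P i).support → x ∈ (P j).support → x = u) ∧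
    F = ⋃ i, {x | x ∈ (P i).support}

/-- `L` is the vertex set of a `k`-linkage from `x` to `y`: a union of `k` paths from
`x` to `y` pairwise sharing no vertices other than `x` and `y`. -/
def IsLinkage (G : SimpleGraph V) (k : ℕ) (x y : V) (L : Set V) : Prop :=
  ∃ P : Fin k → G.Walk x y,
    (∀ i, (P i).IsPath) ∧ Function.Injective P ∧
    (∀ i j, i ≠ j → ∀ z, z ∈ (P i).support → z ∈ (P j).support → z = x ∨ z = y) ∧
    L = ⋃ i, {z | z ∈ (P i).support}

/-- The end represented by the ray `R` is `k`-padded: for every equivalent ray `R'`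
there is a finite `S` such that every vertex of `C(S,R')` admits a `k`-fan to the
image of `R'` in `G`. -/
def IsPaddedEnd (G : SimpleGraph V) (k : ℕ) (R : ℕ → V) : Prop :=
  ∀ R' : ℕ → V, IsRay G R' → RayEquiv G R R' →
    ∃ S : Set V, S.Finite ∧ ∀ v, InC G S R' v → ∃ F, IsFan G k v (Set.range R') F

/-- `G` is `k`-padded at infinity: every end of `G` is `k`-padded. -/
def PaddedAtInfinity (G : SimpleGraph V) (k : ℕ) : Prop :=
  ∀ R : ℕ → V, IsRay G R → IsPaddedEnd G k R

/-- `G` is `k`-connected: it has more than `k` vertices and deleting fewer than `k`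
vertices leaves it connected. -/
def KConnected (G : SimpleGraph V) (k : ℕ) : Prop :=
  (k : ℕ∞) < (Set.univ : Set V).encard ∧
  ∀ S : Set V, S.Finite → S.ncard < k → (G.induce (Sᶜ : Set V)).Connected

/-- The algebraic cycle space: edge sets meeting every vertex in an even number of edges. -/
def CAlg (G : SimpleGraph V) : Set (Set (Sym2 V)) :=
  {D | D ⊆ G.edgeSet ∧ ∀ v : V, {e ∈ D | v ∈ e}.Finite ∧ Even {e ∈ D | v ∈ e}.ncard}

/-- The finite-cycle space: symmetric-difference sums of finitely many finite circuits. -/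
def CFin (G : SimpleGraph V) : Set (Set (Sym2 V)) :=
  {D | ∃ l : List (Set (Sym2 V)), (∀ C ∈ l, IsCircuit G C) ∧ D = l.foldr symmDiff ∅}

/-!
Take a one-way infinite ladder and hang a triangle apex `c n` on every rung, and let `D` be the
cut `E(A, V ∖ A)` with `A` the set of apexes. Every closed walk crosses a cut an even number of
times, so `D` is orthogonal to the finite circuits. A double ray through `c m` must use both ends
`(m, 0)`, `(m, 1)` of its rung, after which it can never come back to column `m`; as both of its
tails go to infinity, it passes no apex left of `c m` and, by symmetry, none right of it. So a
double ray meets `A` at most once and `D` in `0` or `2` edges. Yet the triangles themselves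
form an element of the algebraic cycle space that contains all of `D`.
-/

open Classical in
theorem List.Nodup.ncard_inter_setOf_mem {α : Type*} {l : List α} (hl : l.Nodup)
    (S : Set α) :
    (S ∩ {e | e ∈ l}).ncard = l.countP (· ∈ S) := by
  have : S ∩ {e | e ∈ l} = ↑(l.filter (· ∈ S)).toFinset := by
    ext e
    simp [and_comm]
  rw [this, Set.ncard_coe_finset, List.toFinset_card_of_nodup (hl.filter _),
    List.countP_eq_length_filter]

theorem IsDoubleRay.comp_neg {G : SimpleGraph V} {R : ℤ → V} (hR : IsDoubleRay G R) :
    IsDoubleRay G (fun t => R (-t)) := by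
  refine ⟨hR.1.comp neg_injective, fun t => ?_⟩
  have h := (hR.2 (-t - 1)).symm
  rwa [sub_add_cancel, ← neg_add'] at h

theorem Int.exists_eq_of_le_of_le_of_add_one_le {f : ℤ → ℕ} (hf : ∀ t, f (t + 1) ≤ f t + 1)
    {m : ℕ} {a b : ℤ} (hab : a ≤ b) (ha : f a ≤ m) (hb : m ≤ f b) :
    ∃ t, a ≤ t ∧ t ≤ b ∧ f t = m := by
  induction b, hab using Int.leInduction with
  | base => exact ⟨a, le_rfl, le_rfl, le_antisymm ha hb⟩
  | succ n han ih =>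
    by_cases hn : m ≤ f n
    · obtain ⟨t, hat, htn, ht⟩ := ih hn
      exact ⟨t, hat, htn.trans (Int.le_add_one le_rfl), ht⟩
    · exact ⟨n + 1, by omega, le_rfl, by have := hf n; omega⟩

section Cuts

variable {G : SimpleGraph V} {A : Set V}

theorem cutEdges_subset_edgeSet : cutEdges G A ⊆ G.edgeSet := by
  rintro _ ⟨x, y, hxy, -, -, rfl⟩
  exact hxy

theorem mk_mem_cutEdges_iff {x y : V} (hxy : G.Adj x y) :
    s(x, y) ∈ cutEdges G A ↔ (x ∈ A ↔ y ∉ A) := by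
  constructor
  · rintro ⟨x', y', -, hx', hy', he⟩
    rcases Sym2.eq_iff.mp he with ⟨rfl, rfl⟩ | ⟨rfl, rfl⟩ <;> tauto
  · intro h
    by_cases hx : x ∈ A
    · exact ⟨x, y, hxy, hx, h.mp hx, rfl⟩
    · exact ⟨y, x, hxy.symm, by tauto, hx, Sym2.eq_swap⟩

open Classical in
theorem SimpleGraph.Walk.even_countP_cutEdges_iff {u v : V} (w : G.Walk u v) :
    Even (w.edges.countP (· ∈ cutEdges G A)) ↔ (u ∈ A ↔ v ∈ A) := by
  induction w with
  | nil => simp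
  | @cons x y z h p ih =>
    rw [SimpleGraph.Walk.edges_cons, List.countP_cons]
    have hedge := mk_mem_cutEdges_iff (A := A) h
    by_cases hcut : s(x, y) ∈ cutEdges G A <;> simp only [hcut, decide_true, decide_false,
      if_true, Nat.even_add_one, ih] <;> tauto

theorem evenInter_cutEdges_of_isCircuit {C : Set (Sym2 V)} (hC : IsCircuit G C) :
    EvenInter (cutEdges G A) C := by
  classical
  obtain ⟨v, w, hw, rfl⟩ := hC
  refine ⟨(w.edges.finite_toSet).inter_of_right _, ?_⟩
  rw [hw.edges_nodup.ncard_inter_setOf_mem]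
  exact w.even_countP_cutEdges_iff.mpr Iff.rfl

theorem cutEdges_inter_doubleRayEdges {R : ℤ → V} (hR : IsDoubleRay G R) :
    cutEdges G A ∩ doubleRayEdges R =
      {e | ∃ t, (R t ∈ A ↔ R (t + 1) ∉ A) ∧ e = s(R t, R (t + 1))} := by
  ext e
  constructor
  · rintro ⟨he, t, rfl⟩
    exact ⟨t, (mk_mem_cutEdges_iff (hR.2 t)).mp he, rfl⟩
  · rintro ⟨t, ht, rfl⟩
    exact ⟨(mk_mem_cutEdges_iff (hR.2 t)).mpr ht, t, rfl⟩

theorem evenInter_cutEdges_doubleRayEdges {R : ℤ → V} (hR : IsDoubleRay G R)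
    (hA : {t | R t ∈ A}.Subsingleton) : EvenInter (cutEdges G A) (doubleRayEdges R) := by
  rw [EvenInter, cutEdges_inter_doubleRayEdges hR]
  rcases hA.eq_empty_or_singleton with hA | ⟨k, hA⟩
  · have hA' : ∀ t, R t ∉ A := fun t ht => hA.subset ht
    simp [hA']
  · have hA' : ∀ t, R t ∈ A ↔ t = k := fun t => Set.ext_iff.mp hA t
    have hcross : {e | ∃ t, (R t ∈ A ↔ R (t + 1) ∉ A) ∧ e = s(R t, R (t + 1))} =
        {s(R (k - 1), R k), s(R k, R (k + 1))} := by
      ext e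
      simp only [hA', Set.mem_ofPred_eq, Set.mem_insert_iff, Set.mem_singleton_iff]
      constructor
      · rintro ⟨t, ht, rfl⟩
        rcases eq_or_ne t k with rfl | htk
        · exact Or.inr rfl
        · obtain rfl : t = k - 1 := by omega
          simp
      · rintro (rfl | rfl)
        · exact ⟨k - 1, by omega, by simp⟩
        · exact ⟨k, by omega, rfl⟩
    have hne : s(R (k - 1), R k) ≠ s(R k, R (k + 1)) := by
      intro h
      rcases Sym2.eq_iff.mp h with ⟨h1, -⟩ | ⟨h1, -⟩ <;> have := hR.1 h1 <;> omega
    rw [hcross, Set.ncard_pair hne]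
    exact ⟨Set.toFinite _, even_two⟩

end Cuts

/-- Vertices `(n, 0)`, `(n, 1)` form the `n`-th rung of a one-way infinite ladder,
and `(n, 2)` is joined to both ends of that rung. -/
def triangleLadder : SimpleGraph (ℕ × Fin 3) where
  Adj x y := x ≠ y ∧ (x.1 = y.1 ∨ (x.2 = y.2 ∧ x.2 ≠ 2 ∧ (x.1 + 1 = y.1 ∨ y.1 + 1 = x.1)))

namespace TriangleLadder

def c (n : ℕ) : ℕ × Fin 3 := (n, 2)

theorem adj_of_fst_eq {x y : ℕ × Fin 3} (h : x.1 = y.1) (hxy : x ≠ y) :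
    triangleLadder.Adj x y :=
  ⟨hxy, Or.inl h⟩

theorem fst_le_of_adj {x y : ℕ × Fin 3} (h : triangleLadder.Adj x y) : x.1 ≤ y.1 + 1 := by
  obtain ⟨-, h | ⟨-, -, h | h⟩⟩ := h <;> omega

theorem adj_c_iff {x : ℕ × Fin 3} {n : ℕ} :
    triangleLadder.Adj x (c n) ↔ x = (n, 0) ∨ x = (n, 1) := by
  obtain ⟨m, i⟩ := x
  fin_cases i <;> simp [triangleLadder, c]

theorem eq_of_fst_eq {x : ℕ × Fin 3} {n : ℕ} (h : x.1 = n) :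
    x = (n, 0) ∨ x = (n, 1) ∨ x = c n := by
  obtain ⟨m, i⟩ := x
  fin_cases i <;> simp_all [c]

theorem neighborSet_finite (x : ℕ × Fin 3) : (triangleLadder.neighborSet x).Finite :=
  ((Set.finite_Iic (x.1 + 1)).prod Set.finite_univ).subset fun _ hy =>
    ⟨fst_le_of_adj (triangleLadder.adj_symm hy), trivial⟩

theorem finite_setOf_fst_le (m : ℕ) : {x : ℕ × Fin 3 | x.1 ≤ m}.Finite :=
  ((Set.finite_Iic m).prod Set.finite_univ).subset fun _ hx => ⟨hx, trivial⟩

theorem induce_compl_connected {S : Set (ℕ × Fin 3)} (hS : S.Subsingleton) :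
    (triangleLadder.induce Sᶜ).Connected := by
  set H := triangleLadder.induce Sᶜ
  have hcol : ∀ x y : ↥Sᶜ, x.1.1 = y.1.1 → H.Reachable x y := by
    intro x y hxy
    by_cases h : x = y
    · rw [h]
    · exact SimpleGraph.Adj.reachable (adj_of_fst_eq hxy (Subtype.coe_ne_coe.mpr h))
  have hrail : ∀ n, ∃ i : Fin 3, i ≠ 2 ∧ (n, i) ∉ S ∧ (n + 1, i) ∉ S := by
    intro n
    by_cases h : (n, 0) ∈ S ∨ (n + 1, (0 : Fin 3)) ∈ S
    · refine ⟨1, by decide, fun h1 => ?_, fun h1 => ?_⟩ <;>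
        rcases h with h | h <;> have := hS h h1 <;> simp at this
    · exact ⟨0, by decide, not_or.mp h⟩
  have hstep : ∀ x y : ↥Sᶜ, y.1.1 = x.1.1 + 1 → H.Reachable x y := by
    intro x y hxy
    obtain ⟨i, hi, hn, hn'⟩ := hrail x.1.1
    have hadj : H.Adj ⟨(x.1.1, i), hn⟩ ⟨(x.1.1 + 1, i), hn'⟩ :=
      ⟨by simp, Or.inr ⟨rfl, hi, by simp⟩⟩
    exact (hcol x ⟨_, hn⟩ rfl).trans (hadj.reachable.trans (hcol _ y hxy.symm))
  have hle : ∀ d, ∀ x y : ↥Sᶜ, y.1.1 = x.1.1 + d → H.Reachable x y := by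
    intro d
    induction d with
    | zero => exact fun x y h => hcol x y h.symm
    | succ d ih =>
      intro x y hxy
      obtain ⟨i, -, hi, -⟩ := hrail (x.1.1 + d)
      exact (ih x ⟨_, hi⟩ rfl).trans (hstep _ y hxy)
  obtain ⟨i, -, hi, -⟩ := hrail 0
  refine (SimpleGraph.connected_iff _).mpr ⟨fun x y => ?_, ⟨⟨_, hi⟩⟩⟩
  rcases le_total x.1.1 y.1.1 with h | h
  · obtain ⟨d, hd⟩ := Nat.exists_eq_add_of_le h
    exact hle d x y hd
  · obtain ⟨d, hd⟩ := Nat.exists_eq_add_of_le h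
    exact (hle d y x hd).symm

theorem kConnected_two : KConnected triangleLadder 2 := by
  refine ⟨?_, fun S hS hcard => induce_compl_connected ?_⟩
  · rw [Set.infinite_univ.encard_eq]
    exact ENat.natCast_lt_top 2
  · exact (Set.ncard_le_one hS).mp (by omega)

/-- A double ray through `R k = c m` fills column `m` at `k - 1, k, k + 1`; so beyond `k + 1` it
never meets that column again and, as it leaves every finite set, stays right of it. -/
theorem lt_of_doubleRay {R : ℤ → ℕ × Fin 3} (hR : IsDoubleRay triangleLadder R) {j k : ℤ}
    {m : ℕ} (hk : R k = c m) (hj : (R j).1 < m) : j < k := by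
  have hprev : R (k - 1) = (m, 0) ∨ R (k - 1) = (m, 1) := by
    rw [← adj_c_iff, ← hk]
    simpa using hR.2 (k - 1)
  have hnext : R (k + 1) = (m, 0) ∨ R (k + 1) = (m, 1) := by
    rw [← adj_c_iff, ← hk]
    exact (hR.2 k).symm
  have hne : R (k - 1) ≠ R (k + 1) := fun h => by have := hR.1 h; omega
  have hcol : ∀ t, (R t).1 = m → t ≤ k + 1 := by
    intro t ht
    have : R t = R (k - 1) ∨ R t = R k ∨ R t = R (k + 1) := by
      rcases eq_of_fst_eq ht with h | h | h <;> grind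
    rcases this with h | h | h <;> have := hR.1 h <;> omega
  have hnext_fst : (R (k + 1)).1 = m := by rcases hnext with h | h <;> simp [h]
  by_contra! hkj
  have hkj' : k + 1 < j := by
    have h₁ : j ≠ k := by rintro rfl; simp [hk, c] at hj
    have h₂ : j ≠ k + 1 := by rintro rfl; omega
    omega
  have hfin : {t | (R t).1 ≤ m}.Finite := (finite_setOf_fst_le m).preimage hR.1.injOn
  obtain ⟨t₀, hjt₀, ht₀⟩ := ((Set.Ici_infinite j).sdiff hfin).nonempty
  obtain ⟨t, hjt, -, ht⟩ := Int.exists_eq_of_le_of_le_of_add_one_le (f := fun t => (R t).1)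
    (fun t => fst_le_of_adj (hR.2 t).symm) hjt₀ hj.le (le_of_lt (not_le.mp ht₀))
  have := hcol t ht
  omega

theorem subsingleton_doubleRay_mem_range_c {R : ℤ → ℕ × Fin 3}
    (hR : IsDoubleRay triangleLadder R) : {t | R t ∈ Set.range c}.Subsingleton := by
  have key : ∀ {j k n m}, R j = c n → R k = c m → n < m → False := by
    intro j k n m hj hk h
    have h₁ := lt_of_doubleRay hR (j := j) hk (by simpa [hj, c] using h)
    have h₂ := lt_of_doubleRay hR.comp_neg (j := -j) (k := -k) (by simpa using hk)
      (by simpa [hj, c] using h)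
    omega
  rintro j ⟨n, hj⟩ k ⟨m, hk⟩
  rcases lt_trichotomy n m with h | rfl | h
  · exact (key hj.symm hk.symm h).elim
  · exact hR.1 (hj.symm.trans hk)
  · exact (key hk.symm hj.symm h).elim

def columnEdges : Set (Sym2 (ℕ × Fin 3)) := {e | ∃ x y, x.1 = y.1 ∧ x ≠ y ∧ e = s(x, y)}

theorem columnEdges_incident (v : ℕ × Fin 3) :
    {e ∈ columnEdges | v ∈ e} = (fun i => s(v, (v.1, i))) '' {v.2}ᶜ := by
  ext e
  constructor
  · rintro ⟨⟨x, y, hxy, hne, rfl⟩, hv⟩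
    rcases Sym2.mem_iff.mp hv with rfl | rfl
    · refine ⟨y.2, fun h => hne (Prod.ext hxy h.symm), ?_⟩
      simp [hxy]
    · refine ⟨x.2, fun h => hne (Prod.ext hxy h), ?_⟩
      dsimp only
      rw [show (v.1, x.2) = x from Prod.ext hxy.symm rfl, Sym2.eq_swap]
  · rintro ⟨i, hi, rfl⟩
    exact ⟨⟨v, (v.1, i), rfl, fun h => hi (congrArg Prod.snd h).symm, rfl⟩, Sym2.mem_mk_left _ _⟩

theorem columnEdges_mem_cAlg : columnEdges ∈ CAlg triangleLadder := by
  refine ⟨?_, fun v => ?_⟩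
  · rintro _ ⟨x, y, hxy, hne, rfl⟩
    exact adj_of_fst_eq hxy hne
  · rw [columnEdges_incident]
    refine ⟨Set.toFinite _, ?_⟩
    rw [Set.ncard_image_of_injective _ fun i j h => by simpa using Sym2.congr_right.mp h,
      Set.ncard_eq_toFinset_card']
    simp [Finset.card_compl]

theorem infinite_cutEdges_inter_columnEdges :
    (cutEdges triangleLadder (Set.range c) ∩ columnEdges).Infinite := by
  refine Set.infinite_of_injective_forall_mem (f := fun n => s((n, 0), c n)) ?_ fun n => ⟨?_, ?_⟩
  · intro n m h
    simpa [c] using h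
  · rw [mk_mem_cutEdges_iff (adj_c_iff.mpr (Or.inl rfl))]
    simp [c]
  · exact ⟨(n, 0), c n, rfl, by simp [c], rfl⟩

end TriangleLadder

open TriangleLadder in
/-- There are a locally finite 2-connected graph `G` and an edge set `D` having finite
even intersection with every finite circuit and with the edge set of every double ray,
but meeting some element of the algebraic cycle space infinitely. -/
theorem stmt_19 : ∃ (W : Type) (G : SimpleGraph W) (D : Set (Sym2 W)),
    (∀ x : W, (G.neighborSet x).Finite) ∧ KConnected G 2 ∧ D ⊆ G.edgeSet ∧
    (∀ C, IsCircuit G C → EvenInter D C) ∧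
    (∀ D', IsDoubleRayEdgeSet G D' → EvenInter D D') ∧
    ∃ D' ∈ CAlg G, (D ∩ D').Infinite := by
  refine ⟨ℕ × Fin 3, triangleLadder, cutEdges triangleLadder (Set.range c), neighborSet_finite,
    kConnected_two, cutEdges_subset_edgeSet,
    fun _ => evenInter_cutEdges_of_isCircuit, ?_, columnEdges,
    columnEdges_mem_cAlg, infinite_cutEdges_inter_columnEdges⟩
  rintro _ ⟨R, hR, rfl⟩
  exact evenInter_cutEdges_doubleRayEdges hR (subsingleton_doubleRay_mem_range_c hR)
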